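/- For every nonnegative integer k, every nonnegative integer j, and every real number t ≥ 0, the k-th derivative of the polynomial κ_j(t) = ∑_{l=0}^{j} t^l satisfies κ_j^{(k)}(t) ≤ k! · (κ_j(t))^{k+1}. -/

import Mathlib

/-!
Writing `S_N(t) = ∑_{l<N} t^l`, the `k`-th derivative of `S_N` is `k! ∑_{m<N-k} C(m+k,k) t^m`,
and for `t ≥ 0` the sum `∑_{m<N} C(m+k,k) t^m` is at most `S_N(t)^(k+1)`: it consists of the
terms of degree `< N` in the expansion of `S_N(t)^(k+1)`. The latter is proved by induction on `k`:
by the hockey-stick identity, the coefficients for `k + 1` are the partial sums of those for `k`,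
and multiplying by `S_N(t)` produces at least these partial sums.
-/

open Finset

section OrderedSemiring

variable {R : Type*} [CommSemiring R] [PartialOrder R] [IsOrderedRing R]

theorem sum_range_partialSum_mul_pow_le {a : ℕ → R} (ha : ∀ i, 0 ≤ a i) {t : R} (ht : 0 ≤ t)
    (N : ℕ) :
    ∑ m ∈ range N, (∑ i ∈ range (m + 1), a i) * t ^ m ≤
      (∑ i ∈ range N, a i * t ^ i) * ∑ l ∈ range N, t ^ l := by
  calc ∑ m ∈ range N, (∑ i ∈ range (m + 1), a i) * t ^ m
      = ∑ i ∈ range N, a i * t ^ i * ∑ d ∈ range (N - i), t ^ d := by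
        -- swap the sums over `i ≤ m < N` and write `m = i + d`
        simp only [sum_mul, mul_sum, mul_assoc, ← pow_add, range_eq_Ico]
        rw [← sum_Ico_Ico_comm]
        refine sum_congr rfl fun i _ => ?_
        rw [sum_Ico_eq_sum_range, range_eq_Ico]
    _ ≤ ∑ i ∈ range N, a i * t ^ i * ∑ l ∈ range N, t ^ l := by
        gcongr with i
        · exact mul_nonneg (ha i) (pow_nonneg ht i)
        · exact Nat.sub_le N i
    _ = (∑ i ∈ range N, a i * t ^ i) * ∑ l ∈ range N, t ^ l := (sum_mul ..).symm

theorem sum_range_add_choose_mul_pow_le {t : R} (ht : 0 ≤ t) (N k : ℕ) :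
    ∑ m ∈ range N, ((m + k).choose k : R) * t ^ m ≤ (∑ l ∈ range N, t ^ l) ^ (k + 1) := by
  induction k with
  | zero => simp
  | succ k ih =>
    calc ∑ m ∈ range N, ((m + (k + 1)).choose (k + 1) : R) * t ^ m
        = ∑ m ∈ range N, (∑ i ∈ range (m + 1), ((i + k).choose k : R)) * t ^ m := by
          simp only [← Nat.cast_sum, Nat.sum_range_add_choose, add_assoc]
      _ ≤ (∑ i ∈ range N, ((i + k).choose k : R) * t ^ i) * ∑ l ∈ range N, t ^ l :=
          sum_range_partialSum_mul_pow_le (fun _ => Nat.cast_nonneg _) ht N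
      _ ≤ (∑ l ∈ range N, t ^ l) ^ (k + 1) * ∑ l ∈ range N, t ^ l := by
          gcongr
      _ = (∑ l ∈ range N, t ^ l) ^ (k + 1 + 1) := (pow_succ ..).symm

end OrderedSemiring

theorem sum_range_descFactorial_mul_pow_sub {R : Type*} [CommSemiring R] (t : R) (n k : ℕ) :
    ∑ l ∈ range n, (l.descFactorial k : R) * t ^ (l - k) =
      k.factorial * ∑ m ∈ range (n - k), ((m + k).choose k : R) * t ^ m := by
  have hlow : ∀ l < k, (l.descFactorial k : R) * t ^ (l - k) = 0 := fun l hl => by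
    rw [Nat.descFactorial_eq_zero_iff_lt.2 hl, Nat.cast_zero, zero_mul]
  rcases le_or_gt k n with hkn | hnk
  · obtain ⟨N, rfl⟩ := Nat.exists_eq_add_of_le hkn
    rw [sum_range_add, sum_eq_zero fun l hl => hlow l (mem_range.1 hl), zero_add, mul_sum,
      Nat.add_sub_cancel_left]
    refine sum_congr rfl fun m _ => ?_
    rw [Nat.add_sub_cancel_left, add_comm k m, Nat.descFactorial_eq_factorial_mul_choose,
      Nat.cast_mul, mul_assoc]
  · rw [Nat.sub_eq_zero_of_le hnk.le, range_zero, sum_empty, mul_zero]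
    exact sum_eq_zero fun l hl => hlow l ((mem_range.1 hl).trans hnk)

theorem iteratedDeriv_sum_range_pow {𝕜 : Type*} [NontriviallyNormedField 𝕜] (n k : ℕ) (x : 𝕜) :
    iteratedDeriv k (fun s : 𝕜 => ∑ l ∈ range n, s ^ l) x =
      ∑ l ∈ range n, (l.descFactorial k : 𝕜) * x ^ (l - k) := by
  rw [iteratedDeriv_fun_sum fun l _ => by fun_prop]
  simp only [iteratedDeriv_pow]

/-- For every `k j : ℕ` and `t ≥ 0`, the `k`-th derivative of
`κ_j(t) = ∑_{l=0}^{j} t^l` satisfies `κ_j^{(k)}(t) ≤ k! · (κ_j(t))^(k+1)`. -/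
theorem stmt_0 (k j : ℕ) (t : ℝ) (ht : 0 ≤ t) :
    iteratedDeriv k (fun s : ℝ => ∑ l ∈ Finset.range (j + 1), s ^ l) t ≤
      (k.factorial : ℝ) * (∑ l ∈ Finset.range (j + 1), t ^ l) ^ (k + 1) := by
  rw [iteratedDeriv_sum_range_pow, sum_range_descFactorial_mul_pow_sub]
  gcongr
  calc ∑ m ∈ range (j + 1 - k), ((m + k).choose k : ℝ) * t ^ m
      ≤ (∑ l ∈ range (j + 1 - k), t ^ l) ^ (k + 1) := sum_range_add_choose_mul_pow_le ht _ k
    _ ≤ (∑ l ∈ range (j + 1), t ^ l) ^ (k + 1) := by gcongr; omega
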